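/- Let L : ℝ × (ℝⁿ)^{N+1} → ℝ be smooth, q : ℝ → ℝⁿ a smooth solution of the N-th order Euler–Lagrange equation ∑_{k=0}^{N} (−1)^k (d/dt)^k ∂_{q^{(k)}} L = 0, and q_λ(t) a smooth family with q_0 = q. Suppose there is μ ∈ ℝ with ∂_λ L(t, q_λ(t), …, q_λ⁽ᴺ⁾(t))|_{λ=0} = μ for all t. Then t ↦ ∑_{i=1}^N ∑_{k=0}^{i−1} (−1)^k (d/dt)^k[∂_{q^{(i)}} L] · ∂_λ q_λ^{(i−k−1)}(t)|_{λ=0} − μ t is constant in t. -/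

import Mathlib

open scoped RealInnerProductSpace

/-- The gradient of an `N`-th order Lagrangian `L(t, q, q⁽¹⁾, …, q⁽ᴺ⁾)` with
respect to its block argument `q⁽ⁱ⁾`, evaluated along the motion `q` at time `t`. -/
noncomputable def pgrad {n N : ℕ}
    (L : ℝ → (Fin (N + 1) → EuclideanSpace ℝ (Fin n)) → ℝ)
    (q : ℝ → EuclideanSpace ℝ (Fin n)) (i : Fin (N + 1)) (t : ℝ) :
    EuclideanSpace ℝ (Fin n) :=
  gradient
    (fun y => L t (Function.update (fun j : Fin (N + 1) => iteratedDeriv (j : ℕ) q t) i y))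
    (iteratedDeriv (i : ℕ) q t)

open scoped ContDiff

/-!
Write `v = ∂_λ q_λ|_{λ=0}` and `gᵢ = ∂_{q⁽ⁱ⁾}L` along the motion. Since `∂_λ` commutes with
`d/dt` (Schwarz), the chain rule turns the hypothesis into `∑ᵢ ⟪gᵢ, v⁽ⁱ⁾⟫ = μ`. For each `i`, the
inner sum over `k` is a higher-order integration by parts: its time derivative telescopes to
`⟪gᵢ, v⁽ⁱ⁾⟫ - (-1)ⁱ ⟪gᵢ⁽ⁱ⁾, v⟫`. Summing over `i`, the first terms give `μ` and the second give
`⟪EL, v⟫ = 0`, so the whole double sum has time derivative `μ`.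
-/

section PartialDeriv

variable {E : Type*} [NormedAddCommGroup E] [NormedSpace ℝ E] {f : ℝ × ℝ → E}

theorem HasFDerivAt.hasDerivAt_partial_fst {f' : ℝ × ℝ →L[ℝ] E} {x y : ℝ}
    (hf : HasFDerivAt f f' (x, y)) : HasDerivAt (fun x => f (x, y)) (f' (1, 0)) x := by
  simpa [Function.comp_def] using
    hf.comp_hasDerivAt x ((hasDerivAt_id x).prodMk (hasDerivAt_const x y))

theorem HasFDerivAt.hasDerivAt_partial_snd {f' : ℝ × ℝ →L[ℝ] E} {x y : ℝ}
    (hf : HasFDerivAt f f' (x, y)) : HasDerivAt (fun y => f (x, y)) (f' (0, 1)) y := by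
  simpa [Function.comp_def] using
    hf.comp_hasDerivAt y ((hasDerivAt_const y x).prodMk (hasDerivAt_id y))

theorem ContDiff.deriv_partial_fst {n : WithTop ℕ∞} (hf : ContDiff ℝ (n + 1) f) :
    ContDiff ℝ n (fun p : ℝ × ℝ => deriv (fun x => f (x, p.2)) p.1) := by
  have hd : Differentiable ℝ f := hf.differentiable (by simp)
  rw [funext fun p : ℝ × ℝ => (hd p).hasFDerivAt.hasDerivAt_partial_fst.deriv]
  exact (hf.fderiv_right le_rfl).clm_apply contDiff_const

theorem ContDiff.deriv_partial_snd {n : WithTop ℕ∞} (hf : ContDiff ℝ (n + 1) f) :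
    ContDiff ℝ n (fun p : ℝ × ℝ => deriv (fun y => f (p.1, y)) p.2) := by
  have hd : Differentiable ℝ f := hf.differentiable (by simp)
  rw [funext fun p : ℝ × ℝ => (hd p).hasFDerivAt.hasDerivAt_partial_snd.deriv]
  exact (hf.fderiv_right le_rfl).clm_apply contDiff_const

theorem deriv_partial_comm (hf : ContDiff ℝ 2 f) (a b : ℝ) :
    deriv (fun x => deriv (fun y => f (x, y)) b) a
      = deriv (fun y => deriv (fun x => f (x, y)) a) b := by
  have hd : Differentiable ℝ f := hf.differentiable (by norm_num)
  have hd₂ : HasFDerivAt (fderiv ℝ f) (fderiv ℝ (fderiv ℝ f) (a, b)) (a, b) :=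
    ((hf.fderiv_right (m := 1) (by norm_num)).differentiable (by norm_num) _).hasFDerivAt
  rw [funext fun x => (hd (x, b)).hasFDerivAt.hasDerivAt_partial_snd.deriv,
    funext fun y => (hd (a, y)).hasFDerivAt.hasDerivAt_partial_fst.deriv,
    (hd₂.hasDerivAt_partial_fst.clm_apply (hasDerivAt_const a ((0 : ℝ), (1 : ℝ)))).deriv,
    (hd₂.hasDerivAt_partial_snd.clm_apply (hasDerivAt_const b ((1 : ℝ), (0 : ℝ)))).deriv]
  simpa using (hf.contDiffAt.isSymmSndFDerivAt (by simp)) (1, 0) (0, 1)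

variable {Q : ℝ → ℝ → E}

theorem ContDiff.iteratedDeriv_partial_snd (hQ : ContDiff ℝ ∞ (Function.uncurry Q)) (m : ℕ) :
    ContDiff ℝ ∞ (fun p : ℝ × ℝ => iteratedDeriv m (Q p.1) p.2) := by
  induction m with
  | zero => exact hQ
  | succ m ih =>
    simp_rw [iteratedDeriv_succ]
    exact ContDiff.deriv_partial_snd (f := fun p : ℝ × ℝ => iteratedDeriv m (Q p.1) p.2)
      (ih.of_le (by simp))

theorem ContDiff.deriv_partial_fst_at (hQ : ContDiff ℝ ∞ (Function.uncurry Q)) (l₀ : ℝ) :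
    ContDiff ℝ ∞ (fun t => deriv (fun l => Q l t) l₀) :=
  (ContDiff.deriv_partial_fst (f := Function.uncurry Q) (hQ.of_le (by simp))).comp
    (contDiff_const.prodMk contDiff_id)

theorem deriv_iteratedDeriv_comm (hQ : ContDiff ℝ ∞ (Function.uncurry Q)) (m : ℕ) (l₀ t : ℝ) :
    deriv (fun l => iteratedDeriv m (Q l) t) l₀
      = iteratedDeriv m (fun s => deriv (fun l => Q l s) l₀) t := by
  induction m generalizing t with
  | zero => simp
  | succ m ih =>
    simp_rw [iteratedDeriv_succ, ← funext ih]
    exact deriv_partial_comm (f := fun p : ℝ × ℝ => iteratedDeriv m (Q p.1) p.2)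
      ((hQ.iteratedDeriv_partial_snd m).of_le ENat.LEInfty.out) l₀ t

end PartialDeriv

theorem ContDiff.differentiable_of_uncurry {X Y Z : Type*} [NormedAddCommGroup X]
    [NormedSpace ℝ X] [NormedAddCommGroup Y] [NormedSpace ℝ Y] [NormedAddCommGroup Z]
    [NormedSpace ℝ Z] {n : WithTop ℕ∞} {f : X → Y → Z} (hf : ContDiff ℝ n (Function.uncurry f))
    (hn : n ≠ 0) (x : X) : Differentiable ℝ (f x) :=
  (hf.comp (contDiff_const.prodMk contDiff_id)).differentiable hn

section IntegrationByParts

variable {F : Type*} [NormedAddCommGroup F] [InnerProductSpace ℝ F]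

theorem ContDiff.hasDerivAt_iteratedDeriv {n : WithTop ℕ∞} {f : ℝ → F} (hf : ContDiff ℝ n f)
    {k : ℕ} (hk : k < n) (t : ℝ) :
    HasDerivAt (iteratedDeriv k f) (iteratedDeriv (k + 1) f t) t := by
  rw [iteratedDeriv_succ]
  exact (hf.differentiable_iteratedDeriv k hk t).hasDerivAt

theorem hasDerivAt_sum_range_inner_iteratedDeriv {g v : ℝ → F} {m : ℕ} (hg : ContDiff ℝ m g)
    (hv : ContDiff ℝ m v) (t : ℝ) :
    HasDerivAt
      (fun s => ∑ k ∈ Finset.range m,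
        (-1 : ℝ) ^ k * ⟪iteratedDeriv k g s, iteratedDeriv (m - k - 1) v s⟫)
      (⟪g t, iteratedDeriv m v t⟫ - (-1) ^ m * ⟪iteratedDeriv m g t, v t⟫) t := by
  set C : ℕ → ℝ := fun k => (-1 : ℝ) ^ k * ⟪iteratedDeriv k g t, iteratedDeriv (m - k) v t⟫
  have hterm : ∀ k ∈ Finset.range m, HasDerivAt
      (fun s => (-1 : ℝ) ^ k * ⟪iteratedDeriv k g s, iteratedDeriv (m - k - 1) v s⟫)
      (C k - C (k + 1)) t := by
    intro k hk
    rw [Finset.mem_range] at hk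
    have hmk : m - k - 1 + 1 = m - k := by omega
    have hmk' : m - (k + 1) = m - k - 1 := by omega
    refine (((hg.hasDerivAt_iteratedDeriv (mod_cast hk) t).inner ℝ
      (hv.hasDerivAt_iteratedDeriv (k := m - k - 1) (mod_cast (by omega)) t)).const_mul
      ((-1 : ℝ) ^ k)).congr_deriv ?_
    simp only [C, hmk, hmk', pow_succ]
    ring
  refine (HasDerivAt.fun_sum hterm).congr_deriv ?_
  rw [Finset.sum_range_sub']
  simp [C]

end IntegrationByParts

section Lagrangian

variable {E : Type*} [NormedAddCommGroup E] [NormedSpace ℝ E]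

noncomputable def jet (N : ℕ) (q : ℝ → E) (t : ℝ) : Fin (N + 1) → E :=
  fun j => iteratedDeriv j q t

theorem contDiff_jet {q : ℝ → E} (hq : ContDiff ℝ ∞ q) (N : ℕ) : ContDiff ℝ ∞ (jet N q) :=
  contDiff_pi.mpr fun j => by
    simp only [jet, iteratedDeriv_eq_iterate]
    exact hq.iterate_deriv j

variable {n N : ℕ} {L : ℝ → (Fin (N + 1) → EuclideanSpace ℝ (Fin n)) → ℝ}
  {q : ℝ → EuclideanSpace ℝ (Fin n)}

theorem pgrad_eq_toDual_symm {i : Fin (N + 1)} {t : ℝ}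
    (hL : DifferentiableAt ℝ (L t) (jet N q t)) :
    pgrad L q i t = (InnerProductSpace.toDual ℝ _).symm
      ((fderiv ℝ (L t) (jet N q t)).comp (ContinuousLinearMap.single ℝ _ i)) := by
  have hsingle :
      ContinuousLinearMap.pi (Pi.single i (ContinuousLinearMap.id ℝ (EuclideanSpace ℝ (Fin n))))
        = ContinuousLinearMap.single ℝ (fun _ : Fin (N + 1) => EuclideanSpace ℝ (Fin n)) i := by
    ext w j
    rcases eq_or_ne j i with rfl | h <;> simp [*]
  have hupdate := hasFDerivAt_update (𝕜 := ℝ) (jet N q t) (i := i) (jet N q t i)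
  rw [hsingle] at hupdate
  rw [← Function.update_eq_self i (jet N q t)] at hL
  have hcomp := hL.hasFDerivAt.comp _ hupdate
  rw [Function.update_eq_self] at hcomp
  rw [pgrad, gradient]
  exact congrArg _ hcomp.fderiv

theorem contDiff_pgrad
    (hL : ContDiff ℝ ∞ (fun p : ℝ × (Fin (N + 1) → EuclideanSpace ℝ (Fin n)) => L p.1 p.2))
    (hq : ContDiff ℝ ∞ q) (i : Fin (N + 1)) : ContDiff ℝ ∞ (pgrad L q i) := by
  have hLt : ∀ t, Differentiable ℝ (L t) := hL.differentiable_of_uncurry (by simp)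
  rw [show pgrad L q i = _ from funext fun t => pgrad_eq_toDual_symm (hLt t _)]
  exact (InnerProductSpace.toDual ℝ _).symm.contDiff.comp
    ((hL.fderiv (f := L) (contDiff_jet hq N) (by simp)).clm_comp contDiff_const)

theorem hasDerivAt_lagrangian {t : ℝ} (hL : DifferentiableAt ℝ (L t) (jet N q t))
    {c : ℝ → Fin (N + 1) → EuclideanSpace ℝ (Fin n)} {c' : Fin (N + 1) → EuclideanSpace ℝ (Fin n)}
    {l₀ : ℝ} (hc : HasDerivAt c c' l₀) (hc₀ : c l₀ = jet N q t) :
    HasDerivAt (fun l => L t (c l)) (∑ i, ⟪pgrad L q i t, c' i⟫) l₀ := by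
  have hLc : HasFDerivAt (L t) (fderiv ℝ (L t) (jet N q t)) (c l₀) := hc₀ ▸ hL.hasFDerivAt
  refine (hLc.comp_hasDerivAt l₀ hc).congr_deriv ?_
  rw [← ContinuousLinearMap.sum_comp_single]
  simp [pgrad_eq_toDual_symm hL, InnerProductSpace.toDual_symm_apply]

theorem hasDerivAt_lagrangian_variation {Q : ℝ → ℝ → EuclideanSpace ℝ (Fin n)}
    (hQ : ContDiff ℝ ∞ (Function.uncurry Q)) {l₀ t : ℝ}
    (hL : DifferentiableAt ℝ (L t) (jet N (Q l₀) t)) :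
    HasDerivAt (fun l => L t (jet N (Q l) t))
      (∑ i, ⟪pgrad L (Q l₀) i t,
        iteratedDeriv i (fun s => deriv (fun l => Q l s) l₀) t⟫) l₀ := by
  refine hasDerivAt_lagrangian hL (hasDerivAt_pi.mpr fun j => ?_) rfl
  rw [← deriv_iteratedDeriv_comm hQ]
  exact (((hQ.iteratedDeriv_partial_snd j).differentiable (by simp) (l₀, t)).comp l₀
    (differentiableAt_id.prodMk (differentiableAt_const t))).hasDerivAt

end Lagrangian

theorem exists_forall_sub_mul_eq_of_hasDerivAt {f : ℝ → ℝ} {μ : ℝ}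
    (hf : ∀ t, HasDerivAt f μ t) : ∃ c, ∀ t, f t - μ * t = c := by
  have hg : ∀ t, HasDerivAt (fun t => f t - μ * t) 0 t := fun t => by
    have := (hf t).fun_sub ((hasDerivAt_id' t).const_mul μ)
    rwa [mul_one, sub_self] at this
  exact ⟨f 0 - μ * 0, fun t =>
    is_const_of_deriv_eq_zero (fun s => (hg s).differentiableAt) (fun s => (hg s).deriv) t 0⟩

/-- If along a family of perturbed motions `∂_λ L|_{λ=0} ≡ μ` is constant, then
`∑_{i=1}^N ∑_{k=0}^{i−1} (−1)^k (d/dt)^k[∂_{q⁽ⁱ⁾}L] · ∂_λ q_λ⁽ⁱ⁻ᵏ⁻¹⁾|_{λ=0} − μ t`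
is a first integral. -/
theorem stmt_15 {n N : ℕ}
    (L : ℝ → (Fin (N + 1) → EuclideanSpace ℝ (Fin n)) → ℝ)
    (hL : ContDiff ℝ (⊤ : ℕ∞)
      (fun p : ℝ × (Fin (N + 1) → EuclideanSpace ℝ (Fin n)) => L p.1 p.2))
    (q : ℝ → EuclideanSpace ℝ (Fin n)) (hq : ContDiff ℝ (⊤ : ℕ∞) q)
    (hEL : ∀ t : ℝ,
      ∑ k : Fin (N + 1), ((-1 : ℝ) ^ (k : ℕ)) • iteratedDeriv (k : ℕ) (pgrad L q k) t = 0)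
    (Q : ℝ → ℝ → EuclideanSpace ℝ (Fin n))
    (hQ : ContDiff ℝ (⊤ : ℕ∞) (fun p : ℝ × ℝ => Q p.1 p.2))
    (hQ0 : Q 0 = q)
    (μ : ℝ)
    (hμ : ∀ t : ℝ,
      deriv (fun l => L t (fun i : Fin (N + 1) => iteratedDeriv (i : ℕ) (Q l) t)) 0 = μ) :
    ∃ c : ℝ, ∀ t : ℝ,
      (∑ i : Fin (N + 1), ∑ k ∈ Finset.range (i : ℕ),
        (-1 : ℝ) ^ k *
          ⟪iteratedDeriv k (pgrad L q i) t,
            deriv (fun l => iteratedDeriv ((i : ℕ) - k - 1) (Q l) t) 0⟫)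
      - μ * t = c := by
  subst hQ0
  set v := fun s => deriv (fun l => Q l s) 0
  have hv : ContDiff ℝ ∞ v := hQ.deriv_partial_fst_at 0
  have hLt : ∀ t, Differentiable ℝ (L t) := hL.differentiable_of_uncurry (by simp)
  have hvariation : ∀ t, ∑ i, ⟪pgrad L (Q 0) i t, iteratedDeriv i v t⟫ = μ := fun t =>
    (hasDerivAt_lagrangian_variation hQ (hLt t _)).deriv.symm.trans (hμ t)
  have hboundary : ∀ t, ∑ i : Fin (N + 1),
      (-1 : ℝ) ^ (i : ℕ) * ⟪iteratedDeriv i (pgrad L (Q 0) i) t, v t⟫ = 0 := fun t => by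
    simpa [sum_inner, real_inner_smul_left] using congrArg (⟪·, v t⟫) (hEL t)
  simp_rw [deriv_iteratedDeriv_comm hQ]
  refine exists_forall_sub_mul_eq_of_hasDerivAt fun t => ?_
  refine (HasDerivAt.fun_sum fun i _ => hasDerivAt_sum_range_inner_iteratedDeriv
    ((contDiff_pgrad hL hq i).of_le ENat.LEInfty.out) (hv.of_le ENat.LEInfty.out) t).congr_deriv ?_
  rw [Finset.sum_sub_distrib, hvariation, hboundary, sub_zero]
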